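/- If u's ancestors are disjoint from S (i.e., S ∩ A_u = ∅), then the marginal gain of adding u equals Δ(S,u) = (n_u - |∪_{j∈N_u∩S} N_j|)·p_u, which is strictly positive when p_u > 0. -/

import Mathlib

open MeasureTheory ProbabilityTheory

/-- A finite rooted tree given by a parent function. -/
structure ParentTree (V : Type*) where
  root : V
  parent : V → V
  parent_root : parent root = root
  reaches_root : ∀ v, ∃ n, parent^[n] v = root
  acyclic : ∀ v n, 0 < n → parent^[n] v = v → v = root

namespace ParentTree

variable {V : Type*}

/-- `anc i j` : `i` is a strict ancestor of `j`. -/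
def anc (T : ParentTree V) (i j : V) : Prop :=
  i ≠ j ∧ ∃ n, T.parent^[n] j = i

/-- The set of strict descendants of `i`. -/
def desc (T : ParentTree V) (i : V) : Set V := {v | T.anc i v}

/-- The number of strict descendants of `i`. -/
noncomputable def nd (T : ParentTree V) (i : V) : ℕ := (T.desc i).ncard

/-- The expected total reward of vaccinating the set `S`, where `p i = P(Z_i > τ)`. -/
noncomputable def reward (T : ParentTree V) (p : V → ℝ) (S : Finset V) : ℝ :=
  ∑ i ∈ S, ((T.nd i : ℝ) - ((⋃ j ∈ T.desc i ∩ (S : Set V), T.desc j).ncard : ℝ)) * p i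

end ParentTree

open ParentTree

/-!
Adding `u` leaves every other summand of the reward unchanged: the summand of `i ∈ S` only sees
`N_i ∩ (S ∪ {u})`, and `u ∈ N_i` would make `i` an ancestor of `u`. Hence the gain is the new
summand of `u`. It is positive because the strict ancestor relation is a well-founded strict order,
so `N_u` has an element (a child of `u`) lying below no other element of `N_u`; that element is
missing from `∪_{j ∈ N_u ∩ S} N_j`.
-/

namespace ParentTree

variable {V : Type*} (T : ParentTree V)

theorem anc_trans {i j k : V} (hij : T.anc i j) (hjk : T.anc j k) : T.anc i k := by
  obtain ⟨hne, n, hn⟩ := hij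
  obtain ⟨-, m, hm⟩ := hjk
  refine ⟨?_, n + m, by rw [Function.iterate_add_apply, hm, hn]⟩
  rintro rfl
  have hcycle : T.parent^[n + m] i = i := by rw [Function.iterate_add_apply, hm, hn]
  have hpos : 0 < n + m := by
    by_contra! h
    obtain ⟨rfl, rfl⟩ : n = 0 ∧ m = 0 := by omega
    exact hne hn.symm
  have hroot := T.acyclic i (n + m) hpos hcycle
  -- the cycle through `i` makes `i` the root, whose only ancestor is itself
  exact hne (by rw [← hm, hroot, Function.iterate_fixed T.parent_root])

instance : IsTrans V T.anc := ⟨fun _ _ _ => T.anc_trans⟩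

instance : Std.Irrefl T.anc := ⟨fun _ h => h.1 rfl⟩

theorem wellFounded_anc [Finite V] : WellFounded T.anc :=
  Finite.wellFounded_of_trans_of_irrefl T.anc

theorem desc_subset_desc {i j : V} (h : j ∈ T.desc i) : T.desc j ⊆ T.desc i :=
  fun _ hv => T.anc_trans h hv

theorem biUnion_desc_ssubset_desc [Finite V] {u : V} (hne : (T.desc u).Nonempty) (s : Set V) :
    ⋃ j ∈ T.desc u ∩ s, T.desc j ⊂ T.desc u := by
  have hsub : ⋃ j ∈ T.desc u ∩ s, T.desc j ⊆ T.desc u :=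
    Set.iUnion₂_subset fun j hj => T.desc_subset_desc hj.1
  rw [Set.ssubset_iff_of_subset hsub]
  obtain ⟨v, hv, hmin⟩ := T.wellFounded_anc.has_min (T.desc u) hne
  refine ⟨v, hv, ?_⟩
  simp only [Set.mem_iUnion]
  rintro ⟨j, hj, hjv⟩
  exact hmin j hj.1 hjv

theorem ncard_biUnion_desc_lt_nd [Finite V] {u : V} (hne : (T.desc u).Nonempty) (s : Set V) :
    (⋃ j ∈ T.desc u ∩ s, T.desc j).ncard < T.nd u :=
  Set.ncard_lt_ncard (T.biUnion_desc_ssubset_desc hne s)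

theorem reward_insert_sub_reward [DecidableEq V] (p : V → ℝ) {S : Finset V} {u : V}
    (hu : u ∉ S) (hanc : ∀ a ∈ S, ¬ T.anc a u) :
    T.reward p (insert u S) - T.reward p S
      = ((T.nd u : ℝ) - ((⋃ j ∈ T.desc u ∩ (S : Set V), T.desc j).ncard : ℝ)) * p u := by
  rw [reward, reward, Finset.sum_insert hu, Finset.coe_insert,
    Set.inter_insert_of_notMem (s := T.desc u) (irrefl (r := T.anc) u), add_sub_assoc,
    add_eq_left, sub_eq_zero]
  refine Finset.sum_congr rfl fun i hi => ?_
  rw [Set.inter_insert_of_notMem (s := T.desc i) (hanc i hi)]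

end ParentTree

/-- If no ancestor of `u` lies in `S` (`S ∩ A_u = ∅`), then the marginal gain of adding
`u` equals `(n_u - |∪_{j∈N_u∩S} N_j|)·p_u`, which is strictly positive when `p_u > 0`
(here `u` has at least one descendant). -/
theorem marginal_gain_no_ancestor {V : Type*} [Fintype V] [DecidableEq V]
    (T : ParentTree V) (p : V → ℝ)
    (S : Finset V) (u : V) (hu : u ∉ S)
    (hanc : ∀ a ∈ S, ¬ T.anc a u) (hne : (T.desc u).Nonempty) :
    T.reward p (insert u S) - T.reward p S
        = ((T.nd u : ℝ) - ((⋃ j ∈ T.desc u ∩ (S : Set V), T.desc j).ncard : ℝ)) * p u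
      ∧ (0 < p u → 0 < T.reward p (insert u S) - T.reward p S) := by
  have hgain := T.reward_insert_sub_reward p hu hanc
  refine ⟨hgain, fun hp => hgain ▸ mul_pos ?_ hp⟩
  exact sub_pos.mpr (by exact_mod_cast T.ncard_biUnion_desc_lt_nd hne _)
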